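/- arXiv:physics/0512218 — 8 statements merged into one kernel-verified Lean document; each statement's English description precedes it below -/
import Mathlib

section
/- Let ε_max > 0 and let W : (0, ε_max) → ℝ⁴ be a family of vectors such that W(ε) is time-like for every ε ∈ (0, ε_max). Let Z and Ẑ be any two time-like vectors in ℝ⁴. If |η(W(ε), Z)| / ‖W(ε)‖ → ∞ as ε → 0⁺, then also |η(W(ε), Ẑ)| / ‖W(ε)‖ → ∞ as ε → 0⁺. (Hence the definition of an ultra-relativistic family is independent of the choice of time-like reference vector.) -/
open Filter Topology

/-- The Minkowski bilinear form on ℝ⁴. -/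
noncomputable def eta (x y : Fin 4 → ℝ) : ℝ :=
  -(x 0 * y 0) + x 1 * y 1 + x 2 * y 2 + x 3 * y 3

/-- The Minkowski "norm" ‖x‖ = √(-η(x,x)) of a time-like (or light-like) vector. -/
noncomputable def mnorm (x : Fin 4 → ℝ) : ℝ := Real.sqrt (-(eta x x))

/-! Writing η(u, v) = -u₀v₀ + ⟨u⃗, v⃗⟩, Cauchy–Schwarz and |u⃗| < |u₀| for time-like u give
|u₀| (|v₀| - |v⃗|) ≤ |η(u, v)| ≤ |u₀| (|v₀| + |v⃗|), and |v₀| - |v⃗| > 0 when v is time-like.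
So for time-like u, both |η(u, Z)| and |η(u, Ẑ)| are comparable to |u₀|, with constants depending
only on Z and Ẑ; hence |η(W ε, Ẑ)| ≥ c |η(W ε, Z)| for a fixed c > 0. -/

noncomputable def spatialPart (x : Fin 4 → ℝ) : EuclideanSpace ℝ (Fin 3) := !₂[x 1, x 2, x 3]

lemma eta_eq_neg_mul_add_inner (x y : Fin 4 → ℝ) :
    eta x y = -(x 0 * y 0) + inner ℝ (spatialPart x) (spatialPart y) := by
  simp only [eta, spatialPart, PiLp.inner_apply, RCLike.inner_apply, Real.ringHom_apply,
    Fin.sum_univ_three, Matrix.cons_val_zero, Matrix.cons_val_one, Matrix.cons_val]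
  ring

lemma norm_spatialPart_lt_abs_of_timelike {x : Fin 4 → ℝ} (hx : eta x x < 0) :
    ‖spatialPart x‖ < |x 0| := by
  rw [eta_eq_neg_mul_add_inner, real_inner_self_eq_norm_sq] at hx
  have : ‖spatialPart x‖ ^ 2 < |x 0| ^ 2 := by rw [sq_abs]; linarith
  exact lt_of_pow_lt_pow_left₀ 2 (abs_nonneg _) this

lemma abs_eta_le_mul_add {u : Fin 4 → ℝ} (hu : ‖spatialPart u‖ ≤ |u 0|) (v : Fin 4 → ℝ) :
    |eta u v| ≤ |u 0| * (|v 0| + ‖spatialPart v‖) := by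
  have hcs := abs_real_inner_le_norm (spatialPart u) (spatialPart v)
  have hspatial : ‖spatialPart u‖ * ‖spatialPart v‖ ≤ |u 0| * ‖spatialPart v‖ := by gcongr
  rw [eta_eq_neg_mul_add_inner]
  calc |-(u 0 * v 0) + inner ℝ (spatialPart u) (spatialPart v)|
      ≤ |u 0 * v 0| + |inner ℝ (spatialPart u) (spatialPart v)| := by
        simpa only [abs_neg] using abs_add_le (-(u 0 * v 0)) _
    _ ≤ |u 0| * (|v 0| + ‖spatialPart v‖) := by rw [abs_mul]; linarith

lemma mul_sub_le_abs_eta {u : Fin 4 → ℝ} (hu : ‖spatialPart u‖ ≤ |u 0|) (v : Fin 4 → ℝ) :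
    |u 0| * (|v 0| - ‖spatialPart v‖) ≤ |eta u v| := by
  have hcs := abs_real_inner_le_norm (spatialPart u) (spatialPart v)
  have hspatial : ‖spatialPart u‖ * ‖spatialPart v‖ ≤ |u 0| * ‖spatialPart v‖ := by gcongr
  rw [eta_eq_neg_mul_add_inner]
  calc |u 0| * (|v 0| - ‖spatialPart v‖)
      ≤ |u 0 * v 0| - |inner ℝ (spatialPart u) (spatialPart v)| := by rw [abs_mul]; linarith
    _ ≤ |-(u 0 * v 0) + inner ℝ (spatialPart u) (spatialPart v)| := by
        simpa only [abs_neg, neg_add_eq_sub, abs_sub_comm] using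
          abs_sub_abs_le_abs_sub (u 0 * v 0) (inner ℝ (spatialPart u) (spatialPart v))

lemma mul_abs_eta_le_mul_abs_eta {u : Fin 4 → ℝ} (hu : eta u u < 0) {Zhat : Fin 4 → ℝ}
    (hZhat : eta Zhat Zhat < 0) (Z : Fin 4 → ℝ) :
    (|Zhat 0| - ‖spatialPart Zhat‖) * |eta u Z| ≤ (|Z 0| + ‖spatialPart Z‖) * |eta u Zhat| := by
  have hu' := (norm_spatialPart_lt_abs_of_timelike hu).le
  calc (|Zhat 0| - ‖spatialPart Zhat‖) * |eta u Z|
      ≤ (|Zhat 0| - ‖spatialPart Zhat‖) * (|u 0| * (|Z 0| + ‖spatialPart Z‖)) := by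
        gcongr
        · exact sub_nonneg.2 (norm_spatialPart_lt_abs_of_timelike hZhat).le
        · exact abs_eta_le_mul_add hu' Z
    _ = (|Z 0| + ‖spatialPart Z‖) * (|u 0| * (|Zhat 0| - ‖spatialPart Zhat‖)) := by ring
    _ ≤ (|Z 0| + ‖spatialPart Z‖) * |eta u Zhat| := by
        gcongr
        exact mul_sub_le_abs_eta hu' Zhat

/-- The definition of an ultra-relativistic family of time-like vectors is independent of
the choice of time-like reference vector. -/
theorem ultra_relativistic_indep_of_timelike_ref
    (εmax : ℝ) (hεmax : 0 < εmax) (W : ℝ → Fin 4 → ℝ)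
    (hW : ∀ ε ∈ Set.Ioo (0:ℝ) εmax, eta (W ε) (W ε) < 0)
    (Z Zhat : Fin 4 → ℝ) (hZ : eta Z Z < 0) (hZhat : eta Zhat Zhat < 0)
    (h : Tendsto (fun ε => |eta (W ε) Z| / mnorm (W ε)) (𝓝[>] (0:ℝ)) atTop) :
    Tendsto (fun ε => |eta (W ε) Zhat| / mnorm (W ε)) (𝓝[>] (0:ℝ)) atTop := by
  set A := |Z 0| + ‖spatialPart Z‖
  set B := |Zhat 0| - ‖spatialPart Zhat‖
  have hA : 0 < A := by
    linarith [norm_spatialPart_lt_abs_of_timelike hZ, norm_nonneg (spatialPart Z)]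
  have hB : 0 < B := sub_pos.2 (norm_spatialPart_lt_abs_of_timelike hZhat)
  have hbound : ∀ ε ∈ Set.Ioo (0:ℝ) εmax,
      B / A * (|eta (W ε) Z| / mnorm (W ε)) ≤ |eta (W ε) Zhat| / mnorm (W ε) := by
    intro ε hε
    rw [← mul_div_assoc]
    refine div_le_div_of_nonneg_right ?_ (Real.sqrt_nonneg _)
    rw [div_mul_eq_mul_div, div_le_iff₀ hA, mul_comm _ A]
    exact mul_abs_eta_le_mul_abs_eta (hW ε hε) hZhat Z
  exact tendsto_atTop_mono' _ (eventually_of_mem (Ioo_mem_nhdsGT hεmax) hbound)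
    (h.const_mul_atTop (div_pos hB hA))
end

section
/- Let Z, Ẑ ∈ ℝ⁴ satisfy η(Z, Z) = η(Ẑ, Ẑ) = -1 and let W ∈ ℝ⁴ be time-like. Then |η(Ẑ, W)| ≥ (|η(Ẑ, Z)| - √(η(Ẑ, Z)² - 1)) · |η(Z, W)|, where moreover the factor |η(Ẑ, Z)| - √(η(Ẑ, Z)² - 1) is strictly positive. -/
lemma eta_add_smul_left (x y z : Fin 4 → ℝ) (r : ℝ) :
    eta (fun i => x i + r * y i) z = eta x z + r * eta y z := by
  simp only [eta]; ring

lemma eta_add_smul_right (x y z : Fin 4 → ℝ) (r : ℝ) :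
    eta z (fun i => x i + r * y i) = eta z x + r * eta z y := by
  simp only [eta]; ring

/-- Reverse Cauchy–Schwarz for a time-like vector. -/
lemma eta_revCS (X Y : Fin 4 → ℝ) (h : eta X X < 0) :
    eta X X * eta Y Y ≤ (eta X Y) ^ 2 := by
  simp only [eta] at *
  set A := -(X 0 * X 0) + X 1 * X 1 + X 2 * X 2 + X 3 * X 3 with hA
  set B := -(X 0 * Y 0) + X 1 * Y 1 + X 2 * Y 2 + X 3 * Y 3 with hB
  set C := -(Y 0 * Y 0) + Y 1 * Y 1 + Y 2 * Y 2 + Y 3 * Y 3 with hC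
  have hX0 : 0 < X 0 ^ 2 := by nlinarith [sq_nonneg (X 1), sq_nonneg (X 2), sq_nonneg (X 3)]
  have hS : 0 ≤ (X 0 * Y 1 - Y 0 * X 1)^2 + (X 0 * Y 2 - Y 0 * X 2)^2 +
      (X 0 * Y 3 - Y 0 * X 3)^2 := by positivity
  have h1 : A * ((X 0 * Y 1 - Y 0 * X 1)^2 + (X 0 * Y 2 - Y 0 * X 2)^2 +
      (X 0 * Y 3 - Y 0 * X 3)^2) ≤ 0 := mul_nonpos_of_nonpos_of_nonneg h.le hS
  have key : X 0 ^ 2 * (A * C - B ^ 2) ≤ 0 := by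
    have hid : X 0 ^ 2 * (A * C - B ^ 2) =
        A * ((X 0 * Y 1 - Y 0 * X 1)^2 + (X 0 * Y 2 - Y 0 * X 2)^2 +
          (X 0 * Y 3 - Y 0 * X 3)^2) - (Y 0 * A - X 0 * B)^2 := by
      rw [hA, hB, hC]; ring
    rw [hid]
    have := sq_nonneg (Y 0 * A - X 0 * B)
    linarith
  nlinarith [key, hX0]

/-- Vectors η-orthogonal to a time-like vector are space-like (nonneg norm). -/
lemma eta_orth_nonneg (Z x : Fin 4 → ℝ) (hZ : eta Z Z < 0) (hx : eta Z x = 0) :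
    0 ≤ eta x x := by
  by_contra h
  push_neg at h
  have h1 := eta_revCS x Z h
  have hsymm : eta x Z = eta Z x := by simp only [eta]; ring
  rw [hsymm, hx] at h1
  nlinarith

/-- For unit time-like `Z`, `Zhat` and time-like `W`:
`|η(Ẑ,W)| ≥ (|η(Ẑ,Z)| - √(η(Ẑ,Z)² - 1)) · |η(Z,W)|`, and the factor is strictly positive. -/
theorem minkowski_timelike_contraction_lower_bound
    (Z Zhat W : Fin 4 → ℝ) (hZ : eta Z Z = -1) (hZhat : eta Zhat Zhat = -1)
    (hW : eta W W < 0) :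
    0 < |eta Zhat Z| - Real.sqrt ((eta Zhat Z) ^ 2 - 1) ∧
      |eta Zhat W| ≥ (|eta Zhat Z| - Real.sqrt ((eta Zhat Z) ^ 2 - 1)) * |eta Z W| := by
  set a := eta Zhat Z with ha
  set b := eta Z W with hb
  set c := eta Zhat W with hc
  set w := eta W W with hw
  have hZZhat : eta Z Zhat = a := by rw [ha]; simp only [eta]; ring
  have hWZ : eta W Z = b := by rw [hb]; simp only [eta]; ring
  have hWZhat : eta W Zhat = c := by rw [hc]; simp only [eta]; ring
  have hZt : eta Z Z < 0 := by rw [hZ]; norm_num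
  -- a² ≥ 1
  have ha1 : 1 ≤ a ^ 2 := by
    have h1 := eta_revCS Z Zhat hZt
    rw [hZ, hZhat, hZZhat] at h1
    linarith
  set s := Real.sqrt (a ^ 2 - 1) with hs
  have hs0 : 0 ≤ s := Real.sqrt_nonneg _
  have hs2 : s ^ 2 = a ^ 2 - 1 := Real.sq_sqrt (by linarith)
  have habs : 1 ≤ |a| := by nlinarith [abs_nonneg a, sq_abs a]
  have hpos : 0 < |a| - s := by nlinarith [sq_abs a]
  refine ⟨hpos, ?_⟩
  set u : Fin 4 → ℝ := fun i => Zhat i + a * Z i with hu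
  set v : Fin 4 → ℝ := fun i => W i + b * Z i with hv
  have hq : ∀ t : ℝ, 0 ≤ (w + b ^ 2) * (t * t) + (2 * (c + a * b)) * t + (a ^ 2 - 1) := by
    intro t
    have horth : eta Z (fun i => u i + t * v i) = 0 := by
      simp only [hu, hv, eta_add_smul_right, hZZhat, hZ, ← hb]
      ring
    have hnn := eta_orth_nonneg Z (fun i => u i + t * v i) hZt horth
    have e2 : eta (fun i => u i + t * v i) (fun i => u i + t * v i) =
        (w + b ^ 2) * (t * t) + (2 * (c + a * b)) * t + (a ^ 2 - 1) := by
      simp only [hu, hv, eta_add_smul_left, eta_add_smul_right, hZZhat, hWZ, hWZhat,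
        ← ha, ← hb, ← hc, ← hw, hZ, hZhat]
      ring
    rw [e2] at hnn
    exact hnn
  have hdisc := discrim_le_zero hq
  rw [discrim] at hdisc
  have h1 : (c + a * b) ^ 2 ≤ s ^ 2 * b ^ 2 := by nlinarith [hs2, ha1, sq_nonneg b]
  have h2 : |c + a * b| ≤ s * |b| := by
    have e3 : s * |b| = Real.sqrt ((s * |b|) ^ 2) :=
      (Real.sqrt_sq (by positivity)).symm
    rw [← Real.sqrt_sq_eq_abs, e3]
    apply Real.sqrt_le_sqrt
    rw [mul_pow, sq_abs]
    nlinarith [h1]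
  have h3 : |a * b| ≤ |c + a * b| + |c| := by
    calc |a * b| = |(c + a * b) + (-c)| := by ring_nf
    _ ≤ |c + a * b| + |(-c)| := abs_add_le _ _
    _ = |c + a * b| + |c| := by rw [abs_neg]
  rw [abs_mul] at h3
  have : (|a| - s) * |b| = |a| * |b| - s * |b| := by ring
  linarith
end

section
/- Let ε_max > 0 and let W : (0, ε_max) → ℝ⁴ be a family of time-like vectors that is light-like limited, i.e. W(ε) converges as ε → 0⁺ to a limit W⁰ with W⁰ ≠ 0 and η(W⁰, W⁰) = 0. Then W is ultra-relativistic: for every time-like Z ∈ ℝ⁴, |η(W(ε), Z)| / ‖W(ε)‖ → ∞ as ε → 0⁺. -/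
open Filter Topology

private lemma eta_aux (a0 a1 a2 a3 z0 z1 z2 z3 : ℝ)
    (hnull : -(a0 * a0) + a1 * a1 + a2 * a2 + a3 * a3 = 0)
    (hZ : -(z0 * z0) + z1 * z1 + z2 * z2 + z3 * z3 < 0)
    (h : -(a0 * z0) + a1 * z1 + a2 * z2 + a3 * z3 = 0)
    (h0 : a0 ≠ 0) : False := by
  have h0sq : 0 < a0 ^ 2 := by positivity
  have hZ' : z1 ^ 2 + z2 ^ 2 + z3 ^ 2 < z0 ^ 2 := by nlinarith
  have e1 : a1 ^ 2 + a2 ^ 2 + a3 ^ 2 = a0 ^ 2 := by nlinarith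
  have e2 : a1 * z1 + a2 * z2 + a3 * z3 = a0 * z0 := by linarith
  have cs : (a1 * z1 + a2 * z2 + a3 * z3) ^ 2 ≤
      (a1 ^ 2 + a2 ^ 2 + a3 ^ 2) * (z1 ^ 2 + z2 ^ 2 + z3 ^ 2) := by
    nlinarith [sq_nonneg (a1 * z2 - a2 * z1), sq_nonneg (a1 * z3 - a3 * z1),
      sq_nonneg (a2 * z3 - a3 * z2)]
  rw [e1, e2] at cs
  nlinarith [cs, mul_pos h0sq (sub_pos.2 hZ')]

/-- A light-like limited family of time-like vectors is ultra-relativistic. -/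
theorem lightlike_limited_is_ultra_relativistic
    (εmax : ℝ) (hεmax : 0 < εmax) (W : ℝ → Fin 4 → ℝ)
    (hW : ∀ ε ∈ Set.Ioo (0:ℝ) εmax, eta (W ε) (W ε) < 0)
    (W0 : Fin 4 → ℝ)
    (hlim : Tendsto W (𝓝[>] (0:ℝ)) (𝓝 W0))
    (hW0ne : W0 ≠ 0) (hW0null : eta W0 W0 = 0) :
    ∀ Z : Fin 4 → ℝ, eta Z Z < 0 →
      Tendsto (fun ε => |eta (W ε) Z| / mnorm (W ε)) (𝓝[>] (0:ℝ)) atTop := by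
  intro Z hZ
  have hcont : Continuous fun x : Fin 4 → ℝ => eta x Z := by
    unfold eta
    continuity
  have hcont2 : Continuous fun x : Fin 4 → ℝ => mnorm x := by
    unfold mnorm eta
    continuity
  -- η(W0, Z) ≠ 0
  have hWZ : eta W0 Z ≠ 0 := by
    intro h
    have h0 : W0 0 ≠ 0 := by
      intro h0
      apply hW0ne
      simp only [eta, h0] at hW0null
      have h1 : W0 1 = 0 ∧ W0 2 = 0 ∧ W0 3 = 0 := by
        refine ⟨?_, ?_, ?_⟩ <;>
          nlinarith [sq_nonneg (W0 1), sq_nonneg (W0 2), sq_nonneg (W0 3)]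
      funext i
      fin_cases i <;> simp [h0, h1.1, h1.2.1, h1.2.2]
    simp only [eta] at h hW0null hZ
    exact eta_aux (W0 0) (W0 1) (W0 2) (W0 3) (Z 0) (Z 1) (Z 2) (Z 3)
      hW0null hZ h h0
  have hnum : Tendsto (fun ε => |eta (W ε) Z|) (𝓝[>] (0:ℝ)) (𝓝 |eta W0 Z|) :=
    ((hcont.tendsto W0).comp hlim).abs
  have hden : Tendsto (fun ε => mnorm (W ε)) (𝓝[>] (0:ℝ)) (𝓝 0) := by
    have h := (hcont2.tendsto W0).comp hlim
    have : mnorm W0 = 0 := by simp [mnorm, hW0null]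
    rw [this] at h
    exact h
  have hpos : ∀ᶠ ε in 𝓝[>] (0:ℝ), 0 < mnorm (W ε) := by
    filter_upwards [Ioo_mem_nhdsGT_of_mem ⟨le_refl 0, hεmax⟩] with ε hε
    exact Real.sqrt_pos.2 (by linarith [hW ε hε])
  have hden' : Tendsto (fun ε => mnorm (W ε)) (𝓝[>] (0:ℝ)) (𝓝[>] 0) :=
    tendsto_nhdsWithin_of_tendsto_nhds_of_eventually_within _ hden hpos
  have hinv : Tendsto (fun ε => (mnorm (W ε))⁻¹) (𝓝[>] (0:ℝ)) atTop :=
    tendsto_inv_nhdsGT_zero.comp hden'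
  simp only [div_eq_mul_inv]
  exact hnum.pos_mul_atTop (abs_pos.2 hWZ) hinv
end

section
/- Let ε_max > 0 and let W : (0, ε_max) → ℝ⁴ be a family of time-like vectors that is ultra-relativistic, i.e. for some (equivalently every) time-like Z ∈ ℝ⁴ one has |η(W(ε), Z)| / ‖W(ε)‖ → ∞ as ε → 0⁺. If the limit W⁰ = lim_{ε→0⁺} W(ε) exists and W⁰ ≠ 0, then η(W⁰, W⁰) = 0, i.e. W⁰ is light-like and the family is light-like limited. -/
open Filter Topology

/-- If an ultra-relativistic family of time-like vectors has a nowhere-zero limit as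
`ε → 0⁺`, then that limit is light-like (so the family is light-like limited). -/
theorem ultra_relativistic_with_limit_is_lightlike_limited
    (εmax : ℝ) (hεmax : 0 < εmax) (W : ℝ → Fin 4 → ℝ)
    (hW : ∀ ε ∈ Set.Ioo (0:ℝ) εmax, eta (W ε) (W ε) < 0)
    (hultra : ∀ Z : Fin 4 → ℝ, eta Z Z < 0 →
      Tendsto (fun ε => |eta (W ε) Z| / mnorm (W ε)) (𝓝[>] (0:ℝ)) atTop)
    (W0 : Fin 4 → ℝ)
    (hlim : Tendsto W (𝓝[>] (0:ℝ)) (𝓝 W0))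
    (hW0ne : W0 ≠ 0) :
    eta W0 W0 = 0 := by
  have hcont : ∀ y : Fin 4 → ℝ, Continuous (fun x : Fin 4 → ℝ => eta x y) := by
    intro y
    unfold eta
    continuity
  have hetaWW : Tendsto (fun ε => eta (W ε) (W ε)) (𝓝[>] (0:ℝ)) (𝓝 (eta W0 W0)) := by
    have hc : Continuous (fun x : Fin 4 → ℝ => eta x x) := by
      unfold eta; continuity
    exact (hc.tendsto W0).comp hlim
  have hle : eta W0 W0 ≤ 0 := by
    have hev : ∀ᶠ ε in 𝓝[>] (0:ℝ), eta (W ε) (W ε) ≤ 0 := by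
      filter_upwards [Ioo_mem_nhdsGT_of_mem (by constructor <;> simp [hεmax] : (0:ℝ) ∈ Set.Ico 0 εmax)] with ε hε
      exact (hW ε hε).le
    exact le_of_tendsto hetaWW hev
  rcases hle.lt_or_eq with hlt | heq
  · exfalso
    set Z : Fin 4 → ℝ := fun i => if i = 0 then 1 else 0 with hZdef
    have hZ : eta Z Z < 0 := by simp [eta, hZdef]
    have htop := hultra Z hZ
    have hnum : Tendsto (fun ε => |eta (W ε) Z|) (𝓝[>] (0:ℝ)) (𝓝 |eta W0 Z|) :=
      (continuous_abs.tendsto _).comp (((hcont Z).tendsto W0).comp hlim)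
    have hden : Tendsto (fun ε => mnorm (W ε)) (𝓝[>] (0:ℝ)) (𝓝 (mnorm W0)) := by
      unfold mnorm
      exact (Real.continuous_sqrt.tendsto _).comp (continuous_neg.tendsto _ |>.comp hetaWW)
    have hdpos : mnorm W0 ≠ 0 := by
      unfold mnorm
      exact ne_of_gt (Real.sqrt_pos.mpr (by linarith))
    have hquot : Tendsto (fun ε => |eta (W ε) Z| / mnorm (W ε)) (𝓝[>] (0:ℝ))
        (𝓝 (|eta W0 Z| / mnorm W0)) := hnum.div hden hdpos
    exact not_tendsto_atTop_of_tendsto_nhds hquot htop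
  · exact heq
end

section
/- Let ε_max > 0, let W : (0, ε_max) → ℝ⁴ be a family of time-like vectors, let U ∈ ℝ⁴ with η(U, U) = -1, and for each ε define the Newtonian velocity v(ε) = -W(ε)/η(W(ε), U) - U. Then η(v(ε), v(ε)) → 1 as ε → 0⁺ if and only if |η(W(ε), U)| / ‖W(ε)‖ → ∞ as ε → 0⁺ (i.e. if and only if W is ultra-relativistic with respect to U). -/
open Filter Topology

/-- The Newtonian velocity of `W` relative to an observer `U`. -/
noncomputable def newtVel (U W : Fin 4 → ℝ) : Fin 4 → ℝ :=
  -(eta W U)⁻¹ • W - U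

section Limits

variable {α : Type*} {l : Filter α}

lemma tendsto_atTop_iff_inv_tendsto_zero {𝕜 : Type*} [Field 𝕜] [LinearOrder 𝕜]
    [IsStrictOrderedRing 𝕜] [TopologicalSpace 𝕜] [OrderTopology 𝕜] {g : α → 𝕜}
    (hg : ∀ᶠ x in l, 0 < g x) :
    Tendsto g l atTop ↔ Tendsto g⁻¹ l (𝓝 0) := by
  refine ⟨Tendsto.inv_tendsto_atTop, fun h => ?_⟩
  have hinv : Tendsto g⁻¹ l (𝓝[>] 0) :=
    tendsto_nhdsWithin_iff.2 ⟨h, hg.mono fun _ hx => inv_pos.2 hx⟩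
  simpa using hinv.inv_tendsto_nhdsGT_zero

lemma tendsto_sq_atTop_iff {g : α → ℝ} (hg : ∀ᶠ x in l, 0 ≤ g x) :
    Tendsto (fun x => g x ^ 2) l atTop ↔ Tendsto g l atTop := by
  refine ⟨fun h => ?_, (tendsto_pow_atTop two_ne_zero).comp⟩
  refine (Real.tendsto_sqrt_atTop.comp h).congr' ?_
  filter_upwards [hg] with x hx using Real.sqrt_sq hx

lemma tendsto_one_sub_inv_sq_nhds_one_iff {g : α → ℝ} (hg : ∀ᶠ x in l, 0 < g x) :
    Tendsto (fun x => 1 - (g x ^ 2)⁻¹) l (𝓝 1) ↔ Tendsto g l atTop := by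
  calc _ ↔ Tendsto (fun x => (g x ^ 2)⁻¹) l (𝓝 0) := by
        simpa using tendsto_const_sub_iff (1 : ℝ) (c := 0)
    _ ↔ Tendsto (fun x => g x ^ 2) l atTop :=
        (tendsto_atTop_iff_inv_tendsto_zero (hg.mono fun _ hx => by positivity)).symm
    _ ↔ Tendsto g l atTop := tendsto_sq_atTop_iff (hg.mono fun _ hx => hx.le)

end Limits

section Minkowski

variable {W U : Fin 4 → ℝ}

lemma eta_ne_zero_of_timelike (hW : eta W W < 0) (hU : eta U U < 0) : eta W U ≠ 0 := by
  intro h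
  simp only [eta] at h hW hU
  -- `W₀U₀ = ⟨W⃗, U⃗⟩`, so Cauchy–Schwarz in ℝ³ gives `(W₀U₀)² ≤ |W⃗|²|U⃗|² < W₀²U₀²`.
  have hcs : (W 0 * U 0) ^ 2 ≤
      (W 1 ^ 2 + W 2 ^ 2 + W 3 ^ 2) * (U 1 ^ 2 + U 2 ^ 2 + U 3 ^ 2) := by
    rw [show W 0 * U 0 = W 1 * U 1 + W 2 * U 2 + W 3 * U 3 by linarith]
    nlinarith [sq_nonneg (W 1 * U 2 - W 2 * U 1), sq_nonneg (W 1 * U 3 - W 3 * U 1),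
      sq_nonneg (W 2 * U 3 - W 3 * U 2)]
  have hWs : W 1 ^ 2 + W 2 ^ 2 + W 3 ^ 2 < W 0 ^ 2 := by nlinarith
  have hUs : U 1 ^ 2 + U 2 ^ 2 + U 3 ^ 2 < U 0 ^ 2 := by nlinarith
  have hU0 : 0 < U 0 ^ 2 := by nlinarith [sq_nonneg (U 1), sq_nonneg (U 2), sq_nonneg (U 3)]
  have hWs0 : 0 ≤ W 1 ^ 2 + W 2 ^ 2 + W 3 ^ 2 := by positivity
  nlinarith [mul_le_mul_of_nonneg_left hUs.le hWs0, mul_lt_mul_of_pos_right hWs hU0]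

lemma eta_smul_sub_self (c : ℝ) :
    eta (c • W - U) (c • W - U) = c ^ 2 * eta W W - 2 * c * eta W U + eta U U := by
  simp only [eta, Pi.sub_apply, Pi.smul_apply, smul_eq_mul]
  ring

lemma eta_newtVel_self (hWU : eta W U ≠ 0) (hU : eta U U = -1) :
    eta (newtVel U W) (newtVel U W) = 1 + eta W W / eta W U ^ 2 := by
  rw [newtVel, eta_smul_sub_self, hU]
  field_simp
  ring

lemma mnorm_sq {x : Fin 4 → ℝ} (hx : eta x x ≤ 0) : mnorm x ^ 2 = -eta x x :=
  Real.sq_sqrt (neg_nonneg.2 hx)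

lemma abs_eta_div_mnorm_pos (hW : eta W W < 0) (hU : eta U U < 0) :
    0 < |eta W U| / mnorm W :=
  div_pos (abs_pos.2 (eta_ne_zero_of_timelike hW hU)) (Real.sqrt_pos.2 (neg_pos.2 hW))

lemma eta_newtVel_self_eq_one_sub (hW : eta W W < 0) (hU : eta U U = -1) :
    eta (newtVel U W) (newtVel U W) = 1 - ((|eta W U| / mnorm W) ^ 2)⁻¹ := by
  rw [eta_newtVel_self (eta_ne_zero_of_timelike hW (by linarith)) hU, div_pow, sq_abs,
    mnorm_sq hW.le, inv_div]
  ring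

end Minkowski

/-- A family of time-like vectors has Newtonian speeds (relative to an observer `U`)
tending to the speed of light as `ε → 0⁺` if and only if it is ultra-relativistic with
respect to `U`. -/
theorem newtonian_speed_to_one_iff_ultra_relativistic
    (εmax : ℝ) (hεmax : 0 < εmax) (W : ℝ → Fin 4 → ℝ)
    (hW : ∀ ε ∈ Set.Ioo (0:ℝ) εmax, eta (W ε) (W ε) < 0)
    (U : Fin 4 → ℝ) (hU : eta U U = -1) :
    Tendsto (fun ε => eta (newtVel U (W ε)) (newtVel U (W ε))) (𝓝[>] (0:ℝ)) (𝓝 1)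
      ↔ Tendsto (fun ε => |eta (W ε) U| / mnorm (W ε)) (𝓝[>] (0:ℝ)) atTop := by
  have hWev : ∀ᶠ ε in 𝓝[>] (0:ℝ), eta (W ε) (W ε) < 0 :=
    eventually_of_mem (Ioo_mem_nhdsGT hεmax) hW
  rw [← tendsto_one_sub_inv_sq_nhds_one_iff
    (hWev.mono fun ε hε => abs_eta_div_mnorm_pos hε (by linarith))]
  exact tendsto_congr' (hWev.mono fun ε hε => eta_newtVel_self_eq_one_sub hε hU)
end

section
/- Let ε_max > 0, let v₋₁, v₀ ∈ ℝ⁴, and let w : (0, ε_max) → ℝ⁴ be bounded. Suppose that for every ε ∈ (0, ε_max) the vector V(ε) = ε⁻¹ v₋₁ + v₀ + ε w(ε) satisfies η(V(ε), V(ε)) = -1. Then the family V is ultra-relativistic (i.e. for every time-like Z ∈ ℝ⁴, |η(V(ε), Z)| → ∞ as ε → 0⁺; note ‖V(ε)‖ = 1) if and only if v₋₁ ≠ 0. -/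
/-!
Multiplying by `ε`, the rescaled family `ε V(ε) = v₋₁ + ε v₀ + ε² w(ε)` tends to `v₋₁`, while
`η(ε V, ε V) = -ε² → 0`; hence `v₋₁` is a null vector. If `v₋₁ = 0` then `V(ε) → v₀` and
`η(V, Z)` stays bounded. If `v₋₁ ≠ 0`, the reverse Cauchy–Schwarz inequality makes
`η(v₋₁, Z) ≠ 0` for time-like `Z`, so `η(V, Z) = ε⁻¹ η(ε V, Z) ≈ ε⁻¹ η(v₋₁, Z)` blows up.
-/

open Filter Topology

lemma eta_smul_left (c : ℝ) (x y : Fin 4 → ℝ) : eta (c • x) y = c * eta x y := by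
  simp only [eta, Pi.smul_apply, smul_eq_mul]; ring

lemma eta_smul_right (c : ℝ) (x y : Fin 4 → ℝ) : eta x (c • y) = c * eta x y := by
  simp only [eta, Pi.smul_apply, smul_eq_mul]; ring

lemma continuous_eta : Continuous fun p : (Fin 4 → ℝ) × (Fin 4 → ℝ) => eta p.1 p.2 := by
  unfold eta; fun_prop

lemma Filter.Tendsto.eta {α : Type*} {l : Filter α} {x y : α → Fin 4 → ℝ} {a b : Fin 4 → ℝ}
    (hx : Tendsto x l (𝓝 a)) (hy : Tendsto y l (𝓝 b)) :
    Tendsto (fun t => _root_.eta (x t) (y t)) l (𝓝 (_root_.eta a b)) :=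
  (continuous_eta.tendsto (a, b)).comp (hx.prodMk_nhds hy)

lemma eta_ne_zero_of_null_of_timelike {a Z : Fin 4 → ℝ} (hnull : eta a a = 0) (ha : a ≠ 0)
    (hZ : eta Z Z < 0) : eta a Z ≠ 0 := by
  intro horth
  simp only [eta] at hnull hZ horth
  have hdot : a 0 * Z 0 = a 1 * Z 1 + a 2 * Z 2 + a 3 * Z 3 := by linarith
  have hnull' : a 0 ^ 2 = a 1 ^ 2 + a 2 ^ 2 + a 3 ^ 2 := by linarith
  have hsq : a 0 ^ 2 * (Z 0 ^ 2 - (Z 1 ^ 2 + Z 2 ^ 2 + Z 3 ^ 2)) ≤ 0 :=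
    calc a 0 ^ 2 * (Z 0 ^ 2 - (Z 1 ^ 2 + Z 2 ^ 2 + Z 3 ^ 2))
        = (a 0 * Z 0) ^ 2 - a 0 ^ 2 * (Z 1 ^ 2 + Z 2 ^ 2 + Z 3 ^ 2) := by ring
      _ = (a 1 * Z 1 + a 2 * Z 2 + a 3 * Z 3) ^ 2
          - (a 1 ^ 2 + a 2 ^ 2 + a 3 ^ 2) * (Z 1 ^ 2 + Z 2 ^ 2 + Z 3 ^ 2) := by rw [hdot, hnull']
      _ ≤ 0 := by -- Cauchy–Schwarz for the spatial parts, via Lagrange's identity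
        nlinarith [sq_nonneg (a 1 * Z 2 - a 2 * Z 1), sq_nonneg (a 1 * Z 3 - a 3 * Z 1),
          sq_nonneg (a 2 * Z 3 - a 3 * Z 2)]
  have h0 : a 0 = 0 := by
    by_contra h
    have : 0 < a 0 ^ 2 * (Z 0 ^ 2 - (Z 1 ^ 2 + Z 2 ^ 2 + Z 3 ^ 2)) :=
      mul_pos (by positivity) (by nlinarith)
    linarith
  have hspace : a 1 ^ 2 + a 2 ^ 2 + a 3 ^ 2 = 0 := by rw [← hnull', h0, zero_pow two_ne_zero]
  have h1 : a 1 = 0 := by nlinarith [sq_nonneg (a 1), sq_nonneg (a 2), sq_nonneg (a 3)]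
  have h2 : a 2 = 0 := by nlinarith [sq_nonneg (a 1), sq_nonneg (a 2), sq_nonneg (a 3)]
  have h3 : a 3 = 0 := by nlinarith [sq_nonneg (a 1), sq_nonneg (a 2), sq_nonneg (a 3)]
  exact ha (funext fun i => by fin_cases i <;> assumption)

lemma tendsto_smul_laurent {E : Type*} [NormedAddCommGroup E] [NormedSpace ℝ E] (a b : E)
    {w : ℝ → E} (hw : Tendsto (fun ε => ε • w ε) (𝓝[>] 0) (𝓝 0)) :
    Tendsto (fun ε => ε • (ε⁻¹ • a + b + ε • w ε)) (𝓝[>] 0) (𝓝 a) := by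
  have hid : Tendsto (fun ε : ℝ => ε) (𝓝[>] 0) (𝓝 0) := tendsto_id.mono_left nhdsWithin_le_nhds
  have hlim : Tendsto (fun ε => a + ε • (b + ε • w ε)) (𝓝[>] 0) (𝓝 (a + (0:ℝ) • (b + 0))) :=
    tendsto_const_nhds.add (hid.smul (tendsto_const_nhds.add hw))
  rw [zero_smul, add_zero] at hlim
  refine hlim.congr' (eventually_of_mem self_mem_nhdsWithin fun ε (hε : 0 < ε) => ?_)
  simp only [smul_add, smul_inv_smul₀ hε.ne', add_assoc]

lemma eta_self_eq_zero_of_tendsto_smul {U : ℝ → Fin 4 → ℝ} {a : Fin 4 → ℝ}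
    (hU : Tendsto (fun ε => ε • U ε) (𝓝[>] 0) (𝓝 a))
    (hnorm : ∀ᶠ ε in 𝓝[>] 0, eta (U ε) (U ε) = -1) : eta a a = 0 := by
  have hsq : Tendsto (fun ε : ℝ => -ε ^ 2) (𝓝[>] 0) (𝓝 0) :=
    (Continuous.tendsto' (by fun_prop) 0 0 (by simp)).mono_left nhdsWithin_le_nhds
  refine tendsto_nhds_unique (hU.eta hU) (hsq.congr' ?_)
  filter_upwards [hnorm] with ε hε
  rw [eta_smul_left, eta_smul_right, hε]; ring

lemma tendsto_abs_atTop_of_tendsto_mul {f : ℝ → ℝ} {c : ℝ} (hc : c ≠ 0)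
    (hf : Tendsto (fun ε => ε * f ε) (𝓝[>] 0) (𝓝 c)) :
    Tendsto (fun ε => |f ε|) (𝓝[>] 0) atTop := by
  refine (hf.abs.pos_mul_atTop (abs_pos.2 hc) tendsto_inv_nhdsGT_zero).congr' ?_
  filter_upwards [self_mem_nhdsWithin] with ε (hε : 0 < ε)
  rw [abs_mul, abs_of_pos hε, mul_comm ε, mul_assoc, mul_inv_cancel₀ hε.ne', mul_one]

/-- A normalised family `V(ε) = ε⁻¹ v₋₁ + v₀ + ε w(ε)` (with `w` bounded and
`η(V(ε),V(ε)) = -1`) is ultra-relativistic if and only if `v₋₁ ≠ 0`. -/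
theorem perturbed_velocity_ultra_relativistic_iff_leading_nonzero
    (εmax : ℝ) (hεmax : 0 < εmax) (vm1 v0 : Fin 4 → ℝ) (w : ℝ → Fin 4 → ℝ)
    (hbdd : ∃ C : ℝ, ∀ ε ∈ Set.Ioo (0:ℝ) εmax, ‖w ε‖ ≤ C)
    (hnorm : ∀ ε ∈ Set.Ioo (0:ℝ) εmax,
      eta (ε⁻¹ • vm1 + v0 + ε • w ε) (ε⁻¹ • vm1 + v0 + ε • w ε) = -1) :
    (∀ Z : Fin 4 → ℝ, eta Z Z < 0 →
        Tendsto (fun ε => |eta (ε⁻¹ • vm1 + v0 + ε • w ε) Z|) (𝓝[>] (0:ℝ)) atTop)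
      ↔ vm1 ≠ 0 := by
  obtain ⟨C, hC⟩ := hbdd
  have hIoo : ∀ᶠ ε in 𝓝[>] (0:ℝ), ε ∈ Set.Ioo 0 εmax := Ioo_mem_nhdsGT hεmax
  have hw : Tendsto (fun ε => ε • w ε) (𝓝[>] 0) (𝓝 0) :=
    (tendsto_id.mono_left nhdsWithin_le_nhds).zero_smul_isBoundedUnder_le
      (isBoundedUnder_of_eventually_le (hIoo.mono hC))
  have hscaled := tendsto_smul_laurent vm1 v0 hw
  constructor
  · rintro hUR rfl
    have hV : Tendsto (fun ε => ε⁻¹ • (0 : Fin 4 → ℝ) + v0 + ε • w ε) (𝓝[>] 0) (𝓝 v0) := by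
      simpa using tendsto_const_nhds.add hw
    exact not_tendsto_atTop_of_tendsto_nhds (hV.eta tendsto_const_nhds).abs
      (hUR ![1, 0, 0, 0] (by simp [eta]))
  · intro hvm1 Z hZ
    have hnull := eta_self_eq_zero_of_tendsto_smul hscaled (hIoo.mono hnorm)
    refine tendsto_abs_atTop_of_tendsto_mul (eta_ne_zero_of_null_of_timelike hnull hvm1 hZ) ?_
    simpa only [eta_smul_left] using hscaled.eta tendsto_const_nhds
end

section
/- Let ζ : ℝ → ℝ be differentiable and let (τ, σ) ∈ ℝ² with ζ(σ) ≠ 0. Define t̂(τ, σ) = sinh(ζ(σ)τ)/ζ(σ) and ẑ(τ, σ) = (cosh(ζ(σ)τ) - 1)/ζ(σ) + σ. Then the Jacobian determinant Δ = (∂t̂/∂τ)(∂ẑ/∂σ) - (∂ẑ/∂τ)(∂t̂/∂σ) of the map (τ, σ) ↦ (t̂, ẑ) equals -ζ'(σ)/ζ(σ)² + cosh(ζ(σ)τ)·(1 + ζ'(σ)/ζ(σ)²). -/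
/-!
Differentiating in `τ` gives `∂t̂/∂τ = cosh (ζ τ)` and `∂ẑ/∂τ = sinh (ζ τ)`. In the determinant the
terms of the `σ`-derivatives proportional to `τ ζ'` cancel, and `cosh² - sinh² = 1` turns the rest
into the stated formula.
-/

open Real

theorem hasDerivAt_sinh_mul_div_self {c : ℝ} (hc : c ≠ 0) (τ : ℝ) :
    HasDerivAt (fun t => sinh (c * t) / c) (cosh (c * τ)) τ := by
  have h := ((hasDerivAt_sinh (c * τ)).comp τ ((hasDerivAt_id τ).const_mul c)).div_const c
  simpa [mul_div_cancel_right₀ _ hc] using h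

theorem hasDerivAt_cosh_mul_sub_one_div_add (c s τ : ℝ) :
    HasDerivAt (fun t => (cosh (c * t) - 1) / c + s) (sinh (c * τ)) τ := by
  rcases eq_or_ne c 0 with rfl | hc
  · simpa using hasDerivAt_const τ s
  have h := ((((hasDerivAt_cosh (c * τ)).comp τ
    ((hasDerivAt_id τ).const_mul c)).sub_const 1).div_const c).add_const s
  simpa [mul_div_cancel_right₀ _ hc] using h

section

variable {f : ℝ → ℝ} {f' σ : ℝ}

theorem HasDerivAt.sinh_mul_const_div (hf : HasDerivAt f f' σ) (hσ : f σ ≠ 0) (τ : ℝ) :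
    HasDerivAt (fun s => Real.sinh (f s * τ) / f s)
      ((Real.cosh (f σ * τ) * (f' * τ) * f σ - Real.sinh (f σ * τ) * f') / f σ ^ 2) σ :=
  ((Real.hasDerivAt_sinh _).comp σ (hf.mul_const τ)).div hf hσ

theorem HasDerivAt.cosh_mul_const_sub_one_div_add_id (hf : HasDerivAt f f' σ) (hσ : f σ ≠ 0)
    (τ : ℝ) :
    HasDerivAt (fun s => (Real.cosh (f s * τ) - 1) / f s + s)
      ((Real.sinh (f σ * τ) * (f' * τ) * f σ - (Real.cosh (f σ * τ) - 1) * f') / f σ ^ 2 + 1) σ :=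
  ((((Real.hasDerivAt_cosh _).comp σ (hf.mul_const τ)).sub_const 1).div hf hσ).add
    (hasDerivAt_id σ)

end

/-- The Jacobian determinant of the co-moving coordinate transformation
`(τ,σ) ↦ (t̂,ẑ) = (sinh(ζ(σ)τ)/ζ(σ), (cosh(ζ(σ)τ) - 1)/ζ(σ) + σ)` equals
`-ζ'(σ)/ζ(σ)² + cosh(ζ(σ)τ)(1 + ζ'(σ)/ζ(σ)²)`. -/
theorem wall_of_charge_jacobian_determinant
    (ζ : ℝ → ℝ) (hζ : Differentiable ℝ ζ) (τ σ : ℝ) (hζσ : ζ σ ≠ 0) :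
    deriv (fun τ' => Real.sinh (ζ σ * τ') / ζ σ) τ *
        deriv (fun σ' => (Real.cosh (ζ σ' * τ) - 1) / ζ σ' + σ') σ -
      deriv (fun τ' => (Real.cosh (ζ σ * τ') - 1) / ζ σ + σ) τ *
        deriv (fun σ' => Real.sinh (ζ σ' * τ) / ζ σ') σ
      = -(deriv ζ σ) / (ζ σ) ^ 2 +
        Real.cosh (ζ σ * τ) * (1 + deriv ζ σ / (ζ σ) ^ 2) := by
  have hζ' := (hζ σ).hasDerivAt
  rw [(hasDerivAt_sinh_mul_div_self hζσ τ).deriv,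
    (hasDerivAt_cosh_mul_sub_one_div_add (ζ σ) σ τ).deriv,
    (hζ'.sinh_mul_const_div hζσ τ).deriv,
    (hζ'.cosh_mul_const_sub_one_div_add_id hζσ τ).deriv]
  field_simp
  linear_combination (-deriv ζ σ) * cosh_sq_sub_sinh_sq (ζ σ * τ)
end

section
/- Let ζ : ℝ → ℝ be continuously differentiable with ζ(σ₀) = 0 for some σ₀ ∈ ℝ, and suppose ζ(σ) ≠ 0 for all σ ≠ σ₀ in some neighbourhood of σ₀. Fix τ ∈ ℝ and define, for σ with ζ(σ) ≠ 0, Δ(σ) = -ζ'(σ)/ζ(σ)² + cosh(ζ(σ)τ)·(1 + ζ'(σ)/ζ(σ)²). Then Δ(σ) → 1 + (1/2) ζ'(σ₀) τ² as σ → σ₀ (through σ ≠ σ₀). -/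
/-!
Writing `z = ζ σ`, the Jacobian is `cosh (z τ) + ζ' σ · (cosh (z τ) - 1) / z²`. As `σ → σ₀` we
have `z → 0` through nonzero values, and `(cosh (z τ) - 1) / z² = 2 (sinh (z τ / 2) / z)²`
tends to `τ² / 2` because `sinh (z τ / 2) / z` is a difference quotient of `sinh` at `0`.
-/

open Filter Topology Real

theorem Real.cosh_sub_one_eq_two_mul_sinh_half_sq (x : ℝ) :
    cosh x - 1 = 2 * sinh (x / 2) ^ 2 := by
  nth_rw 1 [show x = 2 * (x / 2) by ring]
  rw [cosh_two_mul, cosh_sq]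
  ring

theorem Real.tendsto_sinh_mul_div_self (a : ℝ) :
    Tendsto (fun x : ℝ => sinh (a * x) / x) (𝓝[≠] 0) (𝓝 a) := by
  have hderiv : HasDerivAt (fun x => sinh (a * x)) a 0 := by
    simpa using ((hasDerivAt_id 0).const_mul a).sinh
  refine (hasDerivAt_iff_tendsto_slope.mp hderiv).congr fun x => ?_
  simp [slope_def_field]

theorem Real.tendsto_cosh_mul_sub_one_div_sq (τ : ℝ) :
    Tendsto (fun x : ℝ => (cosh (x * τ) - 1) / x ^ 2) (𝓝[≠] 0) (𝓝 (τ ^ 2 / 2)) := by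
  convert ((tendsto_sinh_mul_div_self (τ / 2)).pow 2).const_mul 2 using 2 with x
  · rw [cosh_sub_one_eq_two_mul_sinh_half_sq]
    ring_nf
  · ring

theorem jacobian_eq_cosh_add (z d τ : ℝ) (hz : z ≠ 0) :
    -d / z ^ 2 + cosh (z * τ) * (1 + d / z ^ 2) =
      cosh (z * τ) + d * ((cosh (z * τ) - 1) / z ^ 2) := by
  field_simp
  ring

/-- Near a zero `σ₀` of the electric field profile `ζ`, the Jacobian determinant of the
co-moving coordinate transformation tends to `1 + (1/2) ζ'(σ₀) τ²` as `σ → σ₀`. -/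
theorem wall_of_charge_jacobian_limit_at_field_zero
    (ζ : ℝ → ℝ) (hζ : ContDiff ℝ 1 ζ) (σ₀ : ℝ) (hζσ₀ : ζ σ₀ = 0)
    (hne : ∀ᶠ σ in 𝓝[≠] σ₀, ζ σ ≠ 0) (τ : ℝ) :
    Tendsto
      (fun σ => -(deriv ζ σ) / (ζ σ) ^ 2 +
        Real.cosh (ζ σ * τ) * (1 + deriv ζ σ / (ζ σ) ^ 2))
      (𝓝[≠] σ₀) (𝓝 (1 + (1 / 2) * deriv ζ σ₀ * τ ^ 2)) := by
  have hζ_lim : Tendsto ζ (𝓝[≠] σ₀) (𝓝 0) :=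
    hζσ₀ ▸ hζ.continuous.continuousAt.tendsto.mono_left nhdsWithin_le_nhds
  have hderiv_lim : Tendsto (deriv ζ) (𝓝[≠] σ₀) (𝓝 (deriv ζ σ₀)) :=
    (hζ.continuous_deriv le_rfl).continuousAt.tendsto.mono_left nhdsWithin_le_nhds
  have hcosh_lim : Tendsto (fun σ => cosh (ζ σ * τ)) (𝓝[≠] σ₀) (𝓝 1) := by
    have h := (continuous_cosh.tendsto _).comp (hζ_lim.mul_const τ)
    rwa [zero_mul, cosh_zero] at h
  have hζ_punctured : Tendsto ζ (𝓝[≠] σ₀) (𝓝[≠] 0) :=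
    tendsto_nhdsWithin_of_tendsto_nhds_of_eventually_within ζ hζ_lim hne
  have hquot_lim := (tendsto_cosh_mul_sub_one_div_sq τ).comp hζ_punctured
  convert (hcosh_lim.add (hderiv_lim.mul hquot_lim)).congr' ?_ using 2
  · ring
  · filter_upwards [hne] with σ hσ
    exact (jacobian_eq_cosh_add (ζ σ) (deriv ζ σ) τ hσ).symm
end
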